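/- Failure of the Tauberian lemma without uniform continuity: the function f(x) = sin(πx²) on R is bounded, continuous, not in C₀(R), yet its convolution with the Gaussian exp(−π|·|²) belongs to C₀(R). -/

import Mathlib

open MeasureTheory Filter

private lemma aux_im (x y : ℝ) :
    (Complex.exp (((Real.pi : ℂ) * (Complex.I - 1)) * y^2 + (-2*(Real.pi:ℂ)*x*Complex.I) * y
      + (Real.pi:ℂ)*x^2*Complex.I)).im
    = Real.sin (Real.pi * (x - y)^2) * Real.exp (-Real.pi * y^2) := by
  rw [Complex.exp_im]
  have h1 : (((Real.pi:ℂ) * (Complex.I - 1)) * y^2 + (-2*(Real.pi:ℂ)*x*Complex.I) * y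
      + (Real.pi:ℂ)*x^2*Complex.I).re = -Real.pi * y^2 := by
    simp [pow_two]; try ring
  have h2 : (((Real.pi:ℂ) * (Complex.I - 1)) * y^2 + (-2*(Real.pi:ℂ)*x*Complex.I) * y
      + (Real.pi:ℂ)*x^2*Complex.I).im = Real.pi * (x - y)^2 := by
    simp [pow_two]; try ring
  rw [h1, h2]; ring

private lemma aux_re (x : ℝ) :
    ((Real.pi:ℂ)*x^2*Complex.I - (-2*(Real.pi:ℂ)*x*Complex.I)^2
      / (4 * ((Real.pi:ℂ) * (Complex.I - 1)))).re = -Real.pi*x^2/2 := by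
  have hI : Complex.I - 1 ≠ 0 := by
    intro h
    have := congrArg Complex.im h
    simp at this
  have hpi : (Real.pi : ℂ) ≠ 0 := by exact_mod_cast Real.pi_ne_zero
  have h : ((Real.pi:ℂ)*x^2*Complex.I - (-2*(Real.pi:ℂ)*x*Complex.I)^2
      / (4 * ((Real.pi:ℂ) * (Complex.I - 1))))
      = ((-Real.pi*x^2/2 : ℝ) : ℂ) + ((Real.pi*x^2/2 : ℝ):ℂ) * Complex.I := by
    field_simp
    ring_nf
    simp [Complex.I_sq]
    ring
  rw [h]
  simp [pow_two]
  try ring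

/-- Failure of the Tauberian lemma without uniform continuity: `f(x) = sin(πx²)` is
bounded and continuous, does not vanish at infinity, yet its convolution with the
Gaussian `exp(−π|·|²)` vanishes at infinity. -/
theorem stmt_19 :
    (∀ x : ℝ, |Real.sin (Real.pi * x^2)| ≤ 1) ∧
    Continuous (fun x : ℝ => Real.sin (Real.pi * x^2)) ∧
    ¬ Tendsto (fun x : ℝ => Real.sin (Real.pi * x^2)) (cocompact ℝ) (nhds 0) ∧
    Tendsto (fun x : ℝ => ∫ y : ℝ, Real.sin (Real.pi * (x - y)^2) * Real.exp (-Real.pi * y^2))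
      (cocompact ℝ) (nhds 0) := by
  refine ⟨fun x => Real.abs_sin_le_one _, by continuity, ?_, ?_⟩
  · -- not tendsto
    intro h
    set u : ℕ → ℝ := fun n => Real.sqrt (2*n + 1/2) with hu
    have hu2 : ∀ n : ℕ, (u n)^2 = 2*n + 1/2 := by
      intro n
      exact Real.sq_sqrt (by positivity)
    have huT : Tendsto u atTop atTop := by
      refine tendsto_atTop.mpr fun B => ?_
      filter_upwards [eventually_ge_atTop ⌈B^2⌉₊] with n hn
      rcases le_or_gt B 0 with hB | hB
      · exact hB.trans (Real.sqrt_nonneg _)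
      · rw [show u n = Real.sqrt (2*n + 1/2) from rfl, Real.le_sqrt hB.le (by positivity)]
        have h1 : (B^2 : ℝ) ≤ ⌈B^2⌉₊ := Nat.le_ceil _
        have h2 : ((⌈B^2⌉₊ : ℕ) : ℝ) ≤ (n : ℝ) := by exact_mod_cast hn
        nlinarith [Nat.cast_nonneg (α := ℝ) n]
    have huc : Tendsto u atTop (cocompact ℝ) := by
      rw [cocompact_eq_atBot_atTop]
      exact huT.mono_right le_sup_right
    have h1 : Tendsto (fun n : ℕ => Real.sin (Real.pi * (u n)^2)) atTop (nhds 0) :=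
      h.comp huc
    have h2 : ∀ n : ℕ, Real.sin (Real.pi * (u n)^2) = 1 := by
      intro n
      rw [hu2 n]
      have : Real.pi * (2*n + 1/2) = Real.pi/2 + (n : ℤ) * (2 * Real.pi) := by
        push_cast; ring
      rw [this, Real.sin_add_int_mul_two_pi, Real.sin_pi_div_two]
    simp only [h2] at h1
    exact one_ne_zero (tendsto_nhds_unique tendsto_const_nhds h1)
  · -- convolution vanishes at infinity
    set b : ℂ := (Real.pi : ℂ) * (Complex.I - 1) with hb
    have hbre : b.re < 0 := by
      simp [hb, Complex.mul_re]
      positivity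
    set C : ℝ := ‖((Real.pi : ℂ) / (-b)) ^ (1/2 : ℂ)‖ with hC
    have key : ∀ x : ℝ,
        ‖∫ y : ℝ, Real.sin (Real.pi * (x - y)^2) * Real.exp (-Real.pi * y^2)‖
          ≤ C * Real.exp (-Real.pi * ‖x‖^2 / 2) := by
      intro x
      set c : ℂ := -2*(Real.pi:ℂ)*x*Complex.I with hc
      set d : ℂ := (Real.pi:ℂ)*x^2*Complex.I with hd
      have hint : Integrable (fun y : ℝ => Complex.exp (b*y^2 + c*y + d)) :=
        integrable_cexp_quadratic' hbre c d
      have heq : (∫ y : ℝ, Real.sin (Real.pi * (x - y)^2) * Real.exp (-Real.pi * y^2))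
          = (∫ y : ℝ, Complex.exp (b*y^2 + c*y + d)).im := by
        have h := integral_im (μ := volume) hint
        simp only [RCLike.im_to_complex] at h
        rw [← h]
        congr 1
        ext y
        exact (aux_im x y).symm
      rw [heq, integral_cexp_quadratic hbre c d]
      have h1 : |(( (Real.pi:ℂ) / -b) ^ (1/2:ℂ) * Complex.exp (d - c^2/(4*b))).im|
          ≤ ‖(( (Real.pi:ℂ) / -b) ^ (1/2:ℂ) * Complex.exp (d - c^2/(4*b)))‖ :=
        Complex.abs_im_le_norm _
      refine le_trans h1 ?_
      rw [norm_mul, Complex.norm_exp]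
      have h2 : (d - c^2/(4*b)).re = -Real.pi * x^2 / 2 := aux_re x
      rw [h2, Real.norm_eq_abs, sq_abs]
    have hC0 : Tendsto (fun t : ℝ => C * Real.exp (-Real.pi * t^2 / 2)) atTop (nhds 0) := by
      have : Tendsto (fun t : ℝ => -Real.pi * t^2 / 2) atTop atBot := by
        have h2 : Tendsto (fun t : ℝ => t^2) atTop atTop := tendsto_pow_atTop two_ne_zero
        have := h2.const_mul_atTop_of_neg (show -Real.pi/2 < 0 by linarith [Real.pi_pos])
        convert this using 2 with t
        ring
      have := (Real.tendsto_exp_atBot.comp this).const_mul C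
      simpa using this
    have : Tendsto (fun x : ℝ => C * Real.exp (-Real.pi * ‖x‖^2 / 2)) (cocompact ℝ) (nhds 0) :=
      hC0.comp tendsto_norm_cocompact_atTop
    exact squeeze_zero_norm key this
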